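/- arXiv:2407.18974 — 3 statements merged into one kernel-verified Lean document; each statement's English description precedes it below -/
import Mathlib

section
/- The Tutte polynomial and the Whitney rank generating function of a graph satisfy T(G; x, y) = R(G; x-1, y-1), where R(G; x, y) = Σ_{X ⊆ E} x^{r(E)-r(X)} y^{|X|-r(X)}. -/
/-- `r` is a matroid rank function. -/
def IsMatroidRank {ε : Type*} [DecidableEq ε] (r : Finset ε → ℕ) : Prop :=
  (∀ X : Finset ε, r X ≤ X.card) ∧
  (∀ X Y : Finset ε, X ⊆ Y → r X ≤ r Y) ∧
  (∀ X Y : Finset ε, r (X ∪ Y) + r (X ∩ Y) ≤ r X + r Y)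

/-- The rank function of the cycle matroid of a multigraph with vertex set `V`
and edges `ε`, where edge `e` has endpoints `ends e`:
`r(X) = |V| - c(V, X)`, with `c(V, X)` the number of connected components of the
spanning subgraph with edge set `X`. -/
noncomputable def graphRank {V ε : Type*} [Fintype V] (ends : ε → Sym2 V) (X : Finset ε) : ℕ :=
  Fintype.card V - Nat.card (Quot (fun u v : V => ∃ e ∈ X, ends e = s(u, v)))

set_option linter.unusedSectionVars false

open Relation

namespace TutteAux

variable {V ε : Type*} [Fintype V] [DecidableEq ε]

noncomputable def cc (ends : ε → Sym2 V) (X : Finset ε) : ℕ :=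
  Nat.card (Quot (fun u v : V => ∃ e ∈ X, ends e = s(u, v)))

variable (ends : ε → Sym2 V)

/-- the adjacency relation -/
abbrev Rel (X : Finset ε) : V → V → Prop := fun u v => ∃ e ∈ X, ends e = s(u, v)

lemma cc_def (X : Finset ε) : cc ends X = Nat.card (Quot (Rel ends X)) := rfl

instance (X : Finset ε) : Finite (Quot (Rel ends X)) :=
  Finite.of_surjective _ (Quot.mk_surjective (r := Rel ends X))

lemma eqvGen_le {α : Type*} {r s : α → α → Prop}
    (h : ∀ a b, r a b → Relation.EqvGen s a b) {a b : α}
    (hab : Relation.EqvGen r a b) : Relation.EqvGen s a b := by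
  induction hab with
  | rel a b hab => exact h a b hab
  | refl a => exact .refl a
  | symm a b _ ih => exact .symm _ _ ih
  | trans a b c _ _ ih1 ih2 => exact .trans _ _ _ ih1 ih2

/-- the canonical map between quotients for comparable relations -/
noncomputable def qmap {X Y : Finset ε} (h : X ⊆ Y) :
    Quot (Rel ends X) → Quot (Rel ends Y) :=
  Quot.lift (Quot.mk _) (fun a b hab => Quot.sound (by
    obtain ⟨e, he, hee⟩ := hab; exact ⟨e, h he, hee⟩))

lemma qmap_mk {X Y : Finset ε} (h : X ⊆ Y) (a : V) :
    qmap ends h (Quot.mk _ a) = Quot.mk _ a := rfl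

lemma qmap_surjective {X Y : Finset ε} (h : X ⊆ Y) :
    Function.Surjective (qmap ends h) := by
  intro q
  induction q using Quot.ind with
  | _ a => exact ⟨Quot.mk _ a, rfl⟩

lemma cc_mono {X Y : Finset ε} (h : X ⊆ Y) : cc ends Y ≤ cc ends X :=
  Nat.card_le_card_of_surjective _ (qmap_surjective ends h)

lemma cc_le (X : Finset ε) : cc ends X ≤ Fintype.card V := by
  have := Nat.card_le_card_of_surjective _ (Quot.mk_surjective (r := Rel ends X))
  exact (by simpa [Nat.card_eq_fintype_card] using this : Nat.card (Quot (Rel ends X)) ≤ Fintype.card V)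

lemma eqvGen_eq_of_empty {α : Type*} {r : α → α → Prop} (hr : ∀ a b, ¬ r a b) {a b : α}
    (h : Relation.EqvGen r a b) : a = b := by
  induction h with
  | rel a b hab => exact absurd hab (hr a b)
  | refl a => rfl
  | symm a b _ ih => exact ih.symm
  | trans a b c _ _ ih1 ih2 => exact ih1.trans ih2

lemma cc_empty : cc ends (∅ : Finset ε) = Fintype.card V := by
  have hb : Function.Bijective (Quot.mk (Rel ends (∅ : Finset ε))) := by
    refine ⟨fun a b hab => ?_, Quot.mk_surjective⟩
    exact eqvGen_eq_of_empty (by simp [Rel]) (Quot.eq.1 hab)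
  rw [cc_def, ← Nat.card_eq_of_bijective _ hb, Nat.card_eq_fintype_card]

lemma exists_ends (e : ε) : ∃ u v : V, ends e = s(u, v) := by
  induction (ends e) using Sym2.ind with
  | _ u v => exact ⟨u, v, rfl⟩

/-- if the endpoints of `e` are already connected, inserting `e` keeps cc -/
lemma cc_insert_of_rel {X : Finset ε} {e : ε} {u v : V} (he : ends e = s(u, v))
    (h : Relation.EqvGen (Rel ends X) u v) : cc ends (insert e X) = cc ends X := by
  have hsub : X ⊆ insert e X := Finset.subset_insert e X
  have hinj : Function.Injective (qmap ends hsub) := by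
    intro q1 q2
    induction q1 using Quot.ind with
    | _ a =>
    induction q2 using Quot.ind with
    | _ b =>
    intro hq
    rw [qmap_mk, qmap_mk] at hq
    refine Quot.eq.2 (eqvGen_le (fun c d hcd => ?_) (Quot.eq.1 hq))
    obtain ⟨f, hf, hfe⟩ := hcd
    rcases Finset.mem_insert.1 hf with rfl | hfX
    · rw [he] at hfe
      rcases Sym2.eq_iff.1 hfe with ⟨rfl, rfl⟩ | ⟨rfl, rfl⟩
      · exact h
      · exact h.symm _ _
    · exact .rel _ _ ⟨f, hfX, hfe⟩
  exact (Nat.card_eq_of_bijective _ ⟨hinj, qmap_surjective ends hsub⟩).symm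

/-- path decomposition lemma -/
lemma path_lemma {X : Finset ε} {e : ε} {u v : V} (he : ends e = s(u, v))
    (huv : ¬ Relation.EqvGen (Rel ends X) u v) {a b : V}
    (h : Relation.EqvGen (Rel ends (insert e X)) a b) :
    Relation.EqvGen (Rel ends X) a b ∨
      (Relation.EqvGen (Rel ends X) a u ∧ Relation.EqvGen (Rel ends X) v b) ∨
      (Relation.EqvGen (Rel ends X) a v ∧ Relation.EqvGen (Rel ends X) u b) := by
  induction h with
  | rel a b hab =>
    obtain ⟨f, hf, hfe⟩ := hab
    rcases Finset.mem_insert.1 hf with rfl | hfX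
    · rw [he] at hfe
      rcases Sym2.eq_iff.1 hfe with ⟨rfl, rfl⟩ | ⟨rfl, rfl⟩
      · exact Or.inr (Or.inl ⟨.refl _, .refl _⟩)
      · exact Or.inr (Or.inr ⟨.refl _, .refl _⟩)
    · exact Or.inl (.rel _ _ ⟨f, hfX, hfe⟩)
  | refl a => exact Or.inl (.refl a)
  | symm a b _ ih =>
    rcases ih with h1 | ⟨h1, h2⟩ | ⟨h1, h2⟩
    · exact Or.inl (h1.symm _ _)
    · exact Or.inr (Or.inr ⟨h2.symm _ _, h1.symm _ _⟩)
    · exact Or.inr (Or.inl ⟨h2.symm _ _, h1.symm _ _⟩)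
  | trans a b c _ _ ih1 ih2 =>
    rcases ih1 with h1 | ⟨h1, h2⟩ | ⟨h1, h2⟩ <;>
      rcases ih2 with h3 | ⟨h3, h4⟩ | ⟨h3, h4⟩
    · exact Or.inl (h1.trans _ _ _ h3)
    · exact Or.inr (Or.inl ⟨h1.trans _ _ _ h3, h4⟩)
    · exact Or.inr (Or.inr ⟨h1.trans _ _ _ h3, h4⟩)
    · exact Or.inr (Or.inl ⟨h1, h2.trans _ _ _ h3⟩)
    · exact absurd ((h2.trans _ _ _ h3).symm _ _) huv
    · exact Or.inl (h1.trans _ _ _ h4)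
    · exact Or.inr (Or.inr ⟨h1, h2.trans _ _ _ h3⟩)
    · exact Or.inl (h1.trans _ _ _ h4)
    · exact absurd (h2.trans _ _ _ h3) huv

/-- inserting an edge connecting two distinct components drops cc by exactly one -/
lemma cc_insert_of_not_rel {X : Finset ε} {e : ε} {u v : V} (he : ends e = s(u, v))
    (h : ¬ Relation.EqvGen (Rel ends X) u v) :
    cc ends (insert e X) + 1 = cc ends X := by
  classical
  have hsub : X ⊆ insert e X := Finset.subset_insert e X
  -- strict drop
  have hne : cc ends (insert e X) ≠ cc ends X := by
    intro hEq
    have hbij : Function.Bijective (qmap ends hsub) :=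
      (Nat.bijective_iff_surjective_and_card _).2 ⟨qmap_surjective ends hsub, hEq.symm⟩
    have : Quot.mk (Rel ends (insert e X)) u = Quot.mk (Rel ends (insert e X)) v :=
      Quot.sound ⟨e, Finset.mem_insert_self e X, he⟩
    have := hbij.1 (a₁ := Quot.mk _ u) (a₂ := Quot.mk _ v) (by rw [qmap_mk, qmap_mk]; exact this)
    exact h (Quot.eq.1 this)
  -- drop at most one
  have hle : cc ends X ≤ cc ends (insert e X) + 1 := by
    set g : Quot (Rel ends X) → Option (Quot (Rel ends (insert e X))) :=
      fun q => if q = Quot.mk _ u then none else some (qmap ends hsub q) with hg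
    have hginj : Function.Injective g := by
      intro q1 q2
      induction q1 using Quot.ind with
      | _ a =>
      induction q2 using Quot.ind with
      | _ b =>
      intro hq
      simp only [hg] at hq
      by_cases h1 : Quot.mk (Rel ends X) a = Quot.mk (Rel ends X) u <;>
        by_cases h2 : Quot.mk (Rel ends X) b = Quot.mk (Rel ends X) u
      · rw [h1, h2]
      · rw [if_pos h1, if_neg h2] at hq; exact absurd hq (by simp)
      · rw [if_neg h1, if_pos h2] at hq; exact absurd hq (by simp)
      · rw [if_neg h1, if_neg h2, Option.some.injEq, qmap_mk, qmap_mk] at hq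
        have hab := Quot.eq.1 hq
        rcases path_lemma ends he h hab with h3 | ⟨h3, h4⟩ | ⟨h3, h4⟩
        · exact Quot.eq.2 h3
        · exact absurd (Quot.eq.2 h3) h1
        · exact absurd (Quot.eq.2 (h4.symm _ _)) h2
    haveI : Fintype (Quot (Rel ends (insert e X))) := Fintype.ofFinite _
    have := Nat.card_le_card_of_injective g hginj
    simpa [Finite.card_option, cc_def] using this
  have hmono := cc_mono ends hsub
  omega

lemma cc_le_insert (e : ε) (X : Finset ε) : cc ends X ≤ cc ends (insert e X) + 1 := by
  obtain ⟨u, v, he⟩ := exists_ends ends e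
  by_cases h : Relation.EqvGen (Rel ends X) u v
  · rw [cc_insert_of_rel ends he h]; omega
  · have := cc_insert_of_not_rel ends he h
    omega

/-- local submodularity -/
lemma cc_local {X Y : Finset ε} (hXY : X ⊆ Y) (e : ε) :
    cc ends Y + cc ends (insert e X) ≤ cc ends X + cc ends (insert e Y) := by
  obtain ⟨u, v, he⟩ := exists_ends ends e
  by_cases h : Relation.EqvGen (Rel ends X) u v
  · have hY : Relation.EqvGen (Rel ends Y) u v :=
      eqvGen_le (fun a b ⟨f, hf, hfe⟩ => .rel _ _ ⟨f, hXY hf, hfe⟩) h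
    rw [cc_insert_of_rel ends he h, cc_insert_of_rel ends he hY]
    omega
  · have h1 := cc_insert_of_not_rel ends he h
    have h2 := cc_le_insert ends e Y
    have h3 := cc_mono ends (Finset.subset_insert e Y)
    omega

lemma cc_submod (X Y : Finset ε) :
    cc ends X + cc ends Y ≤ cc ends (X ∪ Y) + cc ends (X ∩ Y) := by
  induction Y using Finset.strongInduction with
  | _ Y ih =>
    by_cases hYX : Y ⊆ X
    · rw [Finset.union_eq_left.2 hYX, Finset.inter_eq_right.2 hYX]
    · obtain ⟨e, heY, heX⟩ := Finset.not_subset.1 hYX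
      have hss : Y.erase e ⊂ Y := Finset.erase_ssubset heY
      have IH := ih (Y.erase e) hss
      have loc := cc_local ends (show Y.erase e ⊆ X ∪ Y.erase e from Finset.subset_union_right) e
      have hY : insert e (Y.erase e) = Y := Finset.insert_erase heY
      have hU : insert e (X ∪ Y.erase e) = X ∪ Y := by
        rw [← Finset.union_insert, hY]
      have hI : X ∩ Y.erase e = X ∩ Y := by
        ext a
        simp only [Finset.mem_inter, Finset.mem_erase]
        constructor
        · rintro ⟨h1, _, h2⟩; exact ⟨h1, h2⟩
        · rintro ⟨h1, h2⟩; exact ⟨h1, fun hae => heX (hae ▸ h1), h2⟩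
      rw [hU, hY] at loc
      rw [hI] at IH
      omega

lemma cc_add_card (X : Finset ε) : Fintype.card V ≤ cc ends X + X.card := by
  induction X using Finset.induction with
  | empty => rw [cc_empty]; simp
  | @insert a s ha ih =>
    have := cc_le_insert ends a s
    rw [Finset.card_insert_of_notMem ha]
    omega

lemma graphRank_eq (X : Finset ε) : graphRank ends X = Fintype.card V - cc ends X := rfl

lemma graphRank_isMatroidRank : IsMatroidRank (graphRank ends) := by
  refine ⟨fun X => ?_, fun X Y hXY => ?_, fun X Y => ?_⟩
  · have := cc_add_card ends X
    have := cc_le ends X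
    rw [graphRank_eq]
    omega
  · have := cc_mono ends hXY
    have := cc_le ends X
    have := cc_le ends Y
    rw [graphRank_eq, graphRank_eq]
    omega
  · have h1 := cc_submod ends X Y
    have := cc_le ends X
    have := cc_le ends Y
    have := cc_le ends (X ∪ Y)
    have := cc_le ends (X ∩ Y)
    rw [graphRank_eq, graphRank_eq, graphRank_eq, graphRank_eq]
    omega

end TutteAux

namespace TutteAux

lemma rank_empty {ε : Type*} [DecidableEq ε] {r : Finset ε → ℕ} (hr : IsMatroidRank r) :
    r ∅ = 0 := by
  have := hr.1 ∅; simpa using this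

lemma rank_subadd {ε : Type*} [DecidableEq ε] {r : Finset ε → ℕ} (hr : IsMatroidRank r)
    (e : ε) (X : Finset ε) : r (insert e X) ≤ r X + r {e} := by
  have h := hr.2.2 X {e}
  rw [Finset.union_comm, ← Finset.insert_eq] at h
  omega

lemma rank_singleton_le {ε : Type*} [DecidableEq ε] {r : Finset ε → ℕ} (hr : IsMatroidRank r)
    (e : ε) : r {e} ≤ 1 := by
  simpa using hr.1 {e}

lemma contract_isMatroidRank {ε : Type*} [DecidableEq ε] {r : Finset ε → ℕ}
    (hr : IsMatroidRank r) (e : ε) :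
    IsMatroidRank (fun X => r (insert e X) - r {e}) := by
  obtain ⟨h1, h2, h3⟩ := hr
  refine ⟨fun X => ?_, fun X Y hXY => ?_, fun X Y => ?_⟩
  · have hs := h3 X {e}
    rw [Finset.union_comm, ← Finset.insert_eq] at hs
    have := h1 X
    simp only
    omega
  · have := h2 (insert e X) (insert e Y) (Finset.insert_subset_insert e hXY)
    simp only
    omega
  · have hs := h3 (insert e X) (insert e Y)
    have hu : insert e X ∪ insert e Y = insert e (X ∪ Y) := by
      rw [Finset.insert_union, Finset.union_insert, Finset.insert_idem]
    have hi : insert e X ∩ insert e Y = insert e (X ∩ Y) :=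
      (Finset.insert_inter_distrib X Y e).symm
    rw [hu, hi] at hs
    have hm1 : r {e} ≤ r (insert e (X ∪ Y)) := h2 _ _ (by simp)
    have hm2 : r {e} ≤ r (insert e X) := h2 _ _ (by simp)
    have hm3 : r {e} ≤ r (insert e Y) := h2 _ _ (by simp)
    have hm4 : r {e} ≤ r (insert e (X ∩ Y)) := h2 _ _ (by simp)
    simp only
    omega

lemma sum_split {ε : Type*} [DecidableEq ε] {A : Finset ε} {e : ε} (heA : e ∈ A)
    (f : Finset ε → ℝ) :
    ∑ X ∈ A.powerset, f X = ∑ X ∈ (A.erase e).powerset, f X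
      + ∑ X ∈ (A.erase e).powerset, f (insert e X) := by
  conv_lhs => rw [← Finset.insert_erase heA]
  exact Finset.sum_powerset_insert (Finset.notMem_erase e A) f

lemma whitney {ε : Type*} [DecidableEq ε] (x y : ℝ)
    (T : (Finset ε → ℕ) → Finset ε → ℝ)
    (h_empty : ∀ r : Finset ε → ℕ, IsMatroidRank r → T r ∅ = 1)
    (h_coloop : ∀ (r : Finset ε → ℕ) (A : Finset ε) (e : ε),
      IsMatroidRank r → e ∈ A → r (A.erase e) + 1 = r A →
      T r A = x * T (fun X => r (insert e X) - r {e}) (A.erase e))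
    (h_loop : ∀ (r : Finset ε → ℕ) (A : Finset ε) (e : ε),
      IsMatroidRank r → e ∈ A → r {e} = 0 →
      T r A = y * T r (A.erase e))
    (h_delcon : ∀ (r : Finset ε → ℕ) (A : Finset ε) (e : ε),
      IsMatroidRank r → e ∈ A → r {e} ≠ 0 → r (A.erase e) = r A →
      T r A = T r (A.erase e) + T (fun X => r (insert e X) - r {e}) (A.erase e)) :
    ∀ (n : ℕ) (A : Finset ε) (r : Finset ε → ℕ), A.card = n → IsMatroidRank r →
      T r A = ∑ X ∈ A.powerset, (x - 1) ^ (r A - r X) * (y - 1) ^ (X.card - r X) := by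
  intro n
  induction n with
  | zero =>
    intro A r hA hr
    have hAe : A = ∅ := Finset.card_eq_zero.1 hA
    subst hAe
    rw [h_empty r hr]
    simp [rank_empty hr]
  | succ n ih =>
    intro A r hA hr
    obtain ⟨e, heA⟩ := Finset.card_pos.1 (show 0 < A.card by omega)
    have heA' : e ∉ A.erase e := Finset.notMem_erase e A
    have hinsA : insert e (A.erase e) = A := Finset.insert_erase heA
    have hcard : (A.erase e).card = n := by
      rw [Finset.card_erase_of_mem heA]; omega
    obtain ⟨h1, h2, h3⟩ := id hr
    have hsub : ∀ X : Finset ε, r (insert e X) ≤ r X + r {e} := fun X => rank_subadd hr e X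
    have hmono : ∀ X : Finset ε, r X ≤ r (insert e X) := fun X => h2 _ _ (Finset.subset_insert e X)
    have hre1 : r {e} ≤ 1 := rank_singleton_le hr e
    have hAle : r (A.erase e) ≤ r A := h2 _ _ (Finset.erase_subset e A)
    have hAge : r A ≤ r (A.erase e) + r {e} := by
      conv_lhs => rw [← hinsA]
      exact hsub (A.erase e)
    by_cases hloop : r {e} = 0
    · -- loop case
      have hins_eq : ∀ X : Finset ε, r (insert e X) = r X := fun X =>
        le_antisymm (by have := hsub X; omega) (hmono X)
      have hAA : r A = r (A.erase e) := by
        conv_lhs => rw [← hinsA, hins_eq]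
      rw [h_loop r A e hr heA hloop, ih (A.erase e) r hcard hr,
        sum_split heA (fun X => (x - 1) ^ (r A - r X) * (y - 1) ^ (X.card - r X)), hAA]
      have hS2 : ∑ X ∈ (A.erase e).powerset,
          (x - 1) ^ (r (A.erase e) - r (insert e X))
            * (y - 1) ^ ((insert e X).card - r (insert e X))
          = (∑ X ∈ (A.erase e).powerset,
              (x - 1) ^ (r (A.erase e) - r X) * (y - 1) ^ (X.card - r X)) * (y - 1) := by
        rw [Finset.sum_mul]
        refine Finset.sum_congr rfl fun X hX => ?_
        have hXs := Finset.mem_powerset.1 hX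
        have heX : e ∉ X := fun hh => heA' (hXs hh)
        rw [hins_eq, Finset.card_insert_of_notMem heX]
        have h' : X.card + 1 - r X = (X.card - r X) + 1 := by have := h1 X; omega
        rw [h', pow_succ]
        ring
      rw [hS2]
      ring
    · by_cases hcol : r (A.erase e) + 1 = r A
      · -- coloop case
        have hre : r {e} = 1 := by omega
        have hins1 : ∀ X ⊆ A.erase e, r (insert e X) = r X + 1 := by
          intro X hX
          have hle := hsub X
          have h3' := h3 (insert e X) (A.erase e)
          have hu : insert e X ∪ A.erase e = A := by
            rw [Finset.insert_union, Finset.union_eq_right.2 hX, hinsA]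
          have hi : insert e X ∩ A.erase e = X := by
            ext a
            simp only [Finset.mem_inter, Finset.mem_insert, Finset.mem_erase]
            constructor
            · rintro ⟨rfl | haX, hne, haA⟩
              · exact absurd rfl hne
              · exact haX
            · intro haX
              have h' := Finset.mem_erase.1 (hX haX)
              exact ⟨Or.inr haX, h'.1, h'.2⟩
          rw [hu, hi] at h3'
          omega
        rw [h_coloop r A e hr heA hcol,
          ih (A.erase e) (fun X => r (insert e X) - r {e}) hcard (contract_isMatroidRank hr e),
          sum_split heA (fun X => (x - 1) ^ (r A - r X) * (y - 1) ^ (X.card - r X))]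
        have hS0 : ∑ X ∈ (A.erase e).powerset,
            (x - 1) ^ ((r (insert e (A.erase e)) - r {e}) - (r (insert e X) - r {e}))
              * (y - 1) ^ (X.card - (r (insert e X) - r {e}))
            = ∑ X ∈ (A.erase e).powerset,
              (x - 1) ^ (r (A.erase e) - r X) * (y - 1) ^ (X.card - r X) := by
          refine Finset.sum_congr rfl fun X hX => ?_
          have hXs := Finset.mem_powerset.1 hX
          rw [hins1 X hXs, hinsA, hre]
          have e1 : r A - 1 - (r X + 1 - 1) = r (A.erase e) - r X := by omega
          have e2 : X.card - (r X + 1 - 1) = X.card - r X := by omega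
          rw [e1, e2]
        have hS1 : ∑ X ∈ (A.erase e).powerset,
            (x - 1) ^ (r A - r X) * (y - 1) ^ (X.card - r X)
            = (∑ X ∈ (A.erase e).powerset,
                (x - 1) ^ (r (A.erase e) - r X) * (y - 1) ^ (X.card - r X)) * (x - 1) := by
          rw [Finset.sum_mul]
          refine Finset.sum_congr rfl fun X hX => ?_
          have hXs := Finset.mem_powerset.1 hX
          have hXle : r X ≤ r (A.erase e) := h2 _ _ hXs
          have e1 : r A - r X = (r (A.erase e) - r X) + 1 := by omega
          rw [e1, pow_succ]
          ring
        have hS2 : ∑ X ∈ (A.erase e).powerset,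
            (x - 1) ^ (r A - r (insert e X)) * (y - 1) ^ ((insert e X).card - r (insert e X))
            = ∑ X ∈ (A.erase e).powerset,
              (x - 1) ^ (r (A.erase e) - r X) * (y - 1) ^ (X.card - r X) := by
          refine Finset.sum_congr rfl fun X hX => ?_
          have hXs := Finset.mem_powerset.1 hX
          have heX : e ∉ X := fun hh => heA' (hXs hh)
          rw [hins1 X hXs, Finset.card_insert_of_notMem heX]
          have e1 : r A - (r X + 1) = r (A.erase e) - r X := by omega
          have e2 : X.card + 1 - (r X + 1) = X.card - r X := by omega
          rw [e1, e2]
        rw [hS0, hS1, hS2]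
        ring
      · -- deletion/contraction case
        have hre : r {e} = 1 := by omega
        have hAA : r (A.erase e) = r A := by omega
        have hins_ge : ∀ X : Finset ε, 1 ≤ r (insert e X) := fun X => by
          have := h2 {e} (insert e X) (by simp)
          omega
        rw [h_delcon r A e hr heA hloop hAA, ih (A.erase e) r hcard hr,
          ih (A.erase e) (fun X => r (insert e X) - r {e}) hcard (contract_isMatroidRank hr e),
          sum_split heA (fun X => (x - 1) ^ (r A - r X) * (y - 1) ^ (X.card - r X)), hAA]
        have hS2 : ∑ X ∈ (A.erase e).powerset,
            (x - 1) ^ ((r (insert e (A.erase e)) - r {e}) - (r (insert e X) - r {e}))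
              * (y - 1) ^ (X.card - (r (insert e X) - r {e}))
            = ∑ X ∈ (A.erase e).powerset,
              (x - 1) ^ (r A - r (insert e X)) * (y - 1) ^ ((insert e X).card - r (insert e X)) := by
          refine Finset.sum_congr rfl fun X hX => ?_
          have hXs := Finset.mem_powerset.1 hX
          have heX : e ∉ X := fun hh => heA' (hXs hh)
          have hle : r (insert e X) ≤ r A := by
            refine h2 _ _ ?_
            rw [← hinsA]
            exact Finset.insert_subset_insert e hXs
          have hge := hins_ge X
          rw [hinsA, hre, Finset.card_insert_of_notMem heX]
          have e1 : r A - 1 - (r (insert e X) - 1) = r A - r (insert e X) := by omega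
          have e2 : X.card - (r (insert e X) - 1) = X.card + 1 - r (insert e X) := by
            have := hsub X
            have := h1 X
            omega
          rw [e1, e2]
        rw [hS2]

end TutteAux

/-- The Tutte polynomial of a graph, defined by the deletion–contraction
recursion (`T = 1` on the empty edge set; `T = x·T(G/e)` for a coloop `e`;
`T = y·T(G\e)` for a loop `e`; `T = T(G\e) + T(G/e)` otherwise, where deletion
and contraction are expressed at the level of rank functions:
contraction by `e` replaces `r` by `X ↦ r(X ∪ {e}) - r({e})`), equals the
Whitney rank generating function with shifted variables:
`T(G; x, y) = R(G; x - 1, y - 1)`. -/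
theorem tutte_eq_whitney_rank_gen
    {V ε : Type*} [Fintype V] [Fintype ε] [DecidableEq ε]
    (ends : ε → Sym2 V) (x y : ℝ)
    (T : (Finset ε → ℕ) → Finset ε → ℝ)
    (h_empty : ∀ r : Finset ε → ℕ, IsMatroidRank r → T r ∅ = 1)
    (h_coloop : ∀ (r : Finset ε → ℕ) (A : Finset ε) (e : ε),
      IsMatroidRank r → e ∈ A → r (A.erase e) + 1 = r A →
      T r A = x * T (fun X => r (insert e X) - r {e}) (A.erase e))
    (h_loop : ∀ (r : Finset ε → ℕ) (A : Finset ε) (e : ε),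
      IsMatroidRank r → e ∈ A → r {e} = 0 →
      T r A = y * T r (A.erase e))
    (h_delcon : ∀ (r : Finset ε → ℕ) (A : Finset ε) (e : ε),
      IsMatroidRank r → e ∈ A → r {e} ≠ 0 → r (A.erase e) = r A →
      T r A = T r (A.erase e) + T (fun X => r (insert e X) - r {e}) (A.erase e)) :
    T (graphRank ends) Finset.univ
      = ∑ X ∈ (Finset.univ : Finset ε).powerset,
          (x - 1) ^ (graphRank ends Finset.univ - graphRank ends X)
            * (y - 1) ^ (X.card - graphRank ends X) :=
  TutteAux.whitney x y T h_empty h_coloop h_loop h_delcon Finset.univ.card Finset.univ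
    (graphRank ends) rfl (TutteAux.graphRank_isMatroidRank ends)
end

section
/- The chromatic polynomial of a finite graph G = (V, E) satisfies P(G; λ) = (-1)^{r(E)} λ^{|V| - r(E)} T(G; 1-λ, 0), where r(E) = |V| - c(G) and c(G) is the number of connected components of G. Equivalently, the number of proper λ-colourings equals Σ_{X⊆E} (-1)^{|X|} λ^{c(V,X)}, where c(V,X) is the number of components of the spanning subgraph (V, X). -/
/-!
A map `V → Fin n` is a proper colouring iff no edge of `G` is monochromatic, so inclusion–exclusion
over the edges gives `Σ_{X ⊆ E} (-1)^|X| · #{maps monochromatic on every edge of X}`. A map is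
monochromatic on every edge of `X` exactly when it is constant on each connected component of
`(V, X)`, and there are `n ^ c(V, X)` such maps.
-/

open Finset

namespace SimpleGraph

variable {V α : Type*} {G : SimpleGraph V} {f : V → α}

theorem Reachable.apply_eq_of_forall_adj (hf : ∀ ⦃v w⦄, G.Adj v w → f v = f w) {u v : V}
    (h : G.Reachable u v) : f u = f v := by
  obtain ⟨p⟩ := h
  induction p with
  | nil => rfl
  | cons hadj _ ih => exact (hf hadj).trans ih

def ConnectedComponent.liftEquiv :
    (G.ConnectedComponent → α) ≃ {f : V → α // ∀ ⦃v w⦄, G.Adj v w → f v = f w} where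
  toFun g := ⟨g ∘ G.connectedComponentMk,
    fun _ _ h ↦ congrArg g (connectedComponentMk_eq_of_adj h)⟩
  invFun f := ConnectedComponent.lift f fun _ _ p _ ↦ Reachable.apply_eq_of_forall_adj f.2 ⟨p⟩
  left_inv _ := funext fun c ↦ c.ind fun _ ↦ rfl
  right_inv _ := rfl

def coloringEquiv : G.Coloring α ≃ {f : V → α // ∀ ⦃v w⦄, G.Adj v w → f v ≠ f w} where
  toFun c := ⟨c, fun _ _ ↦ c.valid⟩
  invFun f := Coloring.mk f.1 fun h ↦ f.2 h
  left_inv _ := rfl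
  right_inv _ := rfl

theorem forall_adj_apply_eq_iff :
    (∀ ⦃v w⦄, G.Adj v w → f v = f w) ↔ ∀ e ∈ G.edgeSet, (e.map f).IsDiag := by
  simp [Sym2.forall]

theorem forall_adj_apply_ne_iff :
    (∀ ⦃v w⦄, G.Adj v w → f v ≠ f w) ↔ ∀ e ∈ G.edgeSet, ¬(e.map f).IsDiag := by
  simp [Sym2.forall]

theorem forall_adj_fromEdgeSet_apply_eq_iff {s : Set (Sym2 V)} :
    (∀ ⦃v w⦄, (fromEdgeSet s).Adj v w → f v = f w) ↔ ∀ e ∈ s, (e.map f).IsDiag := by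
  rw [forall_adj_apply_eq_iff, edgeSet_fromEdgeSet]
  exact ⟨fun h e he ↦ (em e.IsDiag).elim Sym2.IsDiag.map fun hd ↦ h e ⟨he, hd⟩,
    fun h e he ↦ h e he.1⟩

variable [Fintype V] [DecidableEq V] [Fintype α] [DecidableEq α]

variable (α) in
def monochromaticMaps (e : Sym2 V) : Finset (V → α) := {f | (e.map f).IsDiag}

theorem card_inf_monochromaticMaps (t : Finset (Sym2 V)) :
    #(t.inf (monochromaticMaps α)) =
      Fintype.card α ^ Nat.card (fromEdgeSet (t : Set (Sym2 V))).ConnectedComponent := by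
  have hmem : ∀ f, f ∈ t.inf (monochromaticMaps α) ↔
      ∀ ⦃v w⦄, (fromEdgeSet (t : Set (Sym2 V))).Adj v w → f v = f w := fun f ↦ by
    rw [forall_adj_fromEdgeSet_apply_eq_iff]
    simp [mem_inf, monochromaticMaps]
  rw [← Nat.card_eq_finsetCard, Nat.card_congr ((Equiv.subtypeEquivRight hmem).trans
    ConnectedComponent.liftEquiv.symm), Nat.card_fun, Nat.card_eq_fintype_card]

theorem card_coloring_eq_card_inf_compl [DecidableRel G.Adj] :
    Nat.card (G.Coloring α) = #(G.edgeFinset.inf fun e ↦ (monochromaticMaps α e)ᶜ) := by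
  have hmem : ∀ f, f ∈ G.edgeFinset.inf (fun e ↦ (monochromaticMaps α e)ᶜ) ↔
      ∀ ⦃v w⦄, G.Adj v w → f v ≠ f w := fun f ↦ by
    simp [forall_adj_apply_ne_iff, mem_inf, monochromaticMaps]
  rw [← Nat.card_eq_finsetCard, Nat.card_congr ((Equiv.subtypeEquivRight hmem).trans
    coloringEquiv.symm)]

end SimpleGraph

open SimpleGraph in
/-- Whitney's expansion of the chromatic polynomial: the number of proper
`n`-colourings of a finite graph `G = (V, E)` equals
`Σ_{X ⊆ E} (-1)^{|X|} n^{c(V,X)}`, where `c(V,X)` is the number of connected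
components of the spanning subgraph `(V, X)`.  This is equivalent to
`P(G; λ) = (-1)^{r(E)} λ^{|V|-r(E)} T(G; 1-λ, 0)`. -/
theorem chromatic_polynomial_subset_expansion
    {V : Type*} [Fintype V] [DecidableEq V] (G : SimpleGraph V)
    [DecidableRel G.Adj] (n : ℕ) :
    (Nat.card (G.Coloring (Fin n)) : ℤ)
      = ∑ X ∈ G.edgeFinset.powerset,
          (-1 : ℤ) ^ X.card
            * (n : ℤ) ^ Nat.card (SimpleGraph.fromEdgeSet (X : Set (Sym2 V))).ConnectedComponent := by
  simp_rw [card_coloring_eq_card_inf_compl, inclusion_exclusion_card_inf_compl,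
    card_inf_monochromaticMaps, Fintype.card_fin, Nat.cast_pow]
end

section
/- (Welsh–Powell bound) For a finite graph G with vertices v_1, ..., v_n ordered so that deg(v_1) ≥ deg(v_2) ≥ ... ≥ deg(v_n), the chromatic number satisfies χ(G) ≤ 1 + max_{1 ≤ i ≤ n} min(deg(v_i), i - 1). -/
/-!
Colour the vertices greedily in the given order, giving each vertex the least natural number
not used by its earlier neighbours. Vertex `i` has at most `min (deg i) i` earlier neighbours,
so it receives a colour at most `min (deg i) i`, and the colouring uses at most
`1 + maxᵢ min (deg i) i` colours.
-/

open Finset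

namespace Nat

theorem sInf_compl_finset_notMem (s : Finset ℕ) : sInf ((s : Set ℕ)ᶜ) ∉ s :=
  Nat.sInf_mem s.finite_toSet.infinite_compl.nonempty

theorem sInf_compl_finset_le_card (s : Finset ℕ) : sInf ((s : Set ℕ)ᶜ) ≤ #s := by
  obtain ⟨c, hc, hcs⟩ := exists_mem_notMem_of_card_lt_card (s := s) (t := range (#s + 1))
    (by simp)
  exact (Nat.sInf_le hcs).trans (Nat.lt_succ_iff.mp (mem_range.mp hc))

end Nat

namespace SimpleGraph

variable {V : Type*} [LinearOrder V] (G : SimpleGraph V) [G.LocallyFinite]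

def earlierNeighborFinset (v : V) : Finset V := {u ∈ G.neighborFinset v | u < v}

variable {G} in
theorem mem_earlierNeighborFinset {u v : V} :
    u ∈ G.earlierNeighborFinset v ↔ G.Adj v u ∧ u < v := by
  simp [earlierNeighborFinset]

theorem card_earlierNeighborFinset_le_degree (v : V) :
    #(G.earlierNeighborFinset v) ≤ G.degree v :=
  card_filter_le _ _

theorem card_earlierNeighborFinset_le_card_Iio [LocallyFiniteOrderBot V] (v : V) :
    #(G.earlierNeighborFinset v) ≤ #(Iio v) :=
  card_le_card fun _ hu => mem_Iio.mpr (mem_earlierNeighborFinset.mp hu).2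

section Greedy

variable [WellFoundedLT V]

noncomputable def greedyColor : V → ℕ :=
  WellFoundedLT.fix fun v color =>
    sInf (((G.earlierNeighborFinset v).attach.image
      fun u => color u.1 (mem_earlierNeighborFinset.mp u.2).2 : Finset ℕ) : Set ℕ)ᶜ

theorem greedyColor_eq (v : V) :
    G.greedyColor v = sInf (((G.earlierNeighborFinset v).image G.greedyColor : Set ℕ))ᶜ := by
  conv_lhs => rw [greedyColor, WellFoundedLT.fix_eq]
  conv_rhs => rw [← (G.earlierNeighborFinset v).attach_image_val, image_image]
  rfl

theorem greedyColor_le_card_earlierNeighborFinset (v : V) :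
    G.greedyColor v ≤ #(G.earlierNeighborFinset v) := by
  rw [greedyColor_eq]
  exact (Nat.sInf_compl_finset_le_card _).trans card_image_le

variable {G} in
theorem greedyColor_ne_of_adj {u v : V} (h : G.Adj u v) : G.greedyColor u ≠ G.greedyColor v := by
  wlog huv : u < v generalizing u v
  · exact (this h.symm ((not_lt.mp huv).lt_of_ne h.ne.symm)).symm
  intro heq
  apply Nat.sInf_compl_finset_notMem ((G.earlierNeighborFinset v).image G.greedyColor)
  rw [← greedyColor_eq, ← heq]
  exact mem_image_of_mem _ (mem_earlierNeighborFinset.mpr ⟨h.symm, huv⟩)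

noncomputable def greedyColoring : G.Coloring ℕ :=
  Coloring.mk G.greedyColor greedyColor_ne_of_adj

theorem colorable_of_forall_card_earlierNeighborFinset_lt {k : ℕ}
    (h : ∀ v, #(G.earlierNeighborFinset v) < k) : G.Colorable k :=
  (colorable_iff_exists_bdd_nat_coloring k).mpr
    ⟨G.greedyColoring, fun v => (G.greedyColor_le_card_earlierNeighborFinset v).trans_lt (h v)⟩

end Greedy

end SimpleGraph

theorem welsh_powell_bound_general
    {n : ℕ} (G : SimpleGraph (Fin n)) [DecidableRel G.Adj] :
    G.chromaticNumber
      ≤ ((1 + Finset.univ.sup (fun i : Fin n => min (G.degree i) (i : ℕ)) : ℕ) : ℕ∞) := by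
  refine (G.colorable_of_forall_card_earlierNeighborFinset_lt fun i => ?_).chromaticNumber_le
  calc #(G.earlierNeighborFinset i)
      ≤ min (G.degree i) i :=
        le_min (G.card_earlierNeighborFinset_le_degree i)
          (by simpa using G.card_earlierNeighborFinset_le_card_Iio i)
    _ ≤ univ.sup fun i : Fin n => min (G.degree i) (i : ℕ) :=
        le_sup (f := fun i : Fin n => min (G.degree i) (i : ℕ)) (mem_univ i)
    _ < _ := by omega

/-- Welsh–Powell bound: if the vertices `v_0, …, v_{n-1}` of `G` are ordered by
non-increasing degree, then `χ(G) ≤ 1 + max_i min(deg(v_i), i)`. -/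
theorem welsh_powell_bound
    {n : ℕ} (G : SimpleGraph (Fin n)) [DecidableRel G.Adj]
    (h_sorted : ∀ i j : Fin n, i ≤ j → G.degree j ≤ G.degree i) :
    G.chromaticNumber
      ≤ ((1 + Finset.univ.sup (fun i : Fin n => min (G.degree i) (i : ℕ)) : ℕ) : ℕ∞) :=
  welsh_powell_bound_general G
end
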